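/- Let X and Y be the two vertex classes of K_{n,n}, let G_1, …, G_t be pairwise edge-disjoint subgraphs of K_{n,n} such that no G_i contains a cycle of length at most 2k, and let Z = [t] × [k]. Then the 3-partite 3-uniform hypergraph with vertex classes X, Y, Z whose hyperedges are all sets {x, y, (i, s)} with x ∈ X, y ∈ Y, i ∈ [t], s ∈ [k], and {x, y} an edge of G_i, is tight-cycle-free. -/

import Mathlib

/-- The edge ("window") `{v i, v (i+1), …, v (i+r-1)}` of a tight cycle. -/
def tightWindow {V : Type*} [DecidableEq V] (r : ℕ) {ℓ : ℕ} (v : ZMod ℓ → V)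
    (i : ZMod ℓ) : Finset V :=
  Finset.image (fun j : Fin r => v (i + (j : ℕ))) Finset.univ

/-- `E` contains an `r`-uniform tight cycle of length `ℓ`: distinct vertices
`v 0, …, v (ℓ-1)` all of whose `r`-windows (indices mod `ℓ`) are edges of `E`. -/
def IsTightCycleIn {V : Type*} [DecidableEq V] (r ℓ : ℕ) (E : Set (Finset V)) : Prop :=
  ∃ v : ZMod ℓ → V, Function.Injective v ∧ ∀ i : ZMod ℓ, tightWindow r v i ∈ E

/-- `E` contains an `r`-uniform tight cycle of some length `ℓ > r`. -/
def HasTightCycle {V : Type*} [DecidableEq V] (r : ℕ) (E : Set (Finset V)) : Prop :=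
  ∃ ℓ : ℕ, r < ℓ ∧ IsTightCycleIn r ℓ E

/-- `E` is tight-cycle-free. -/
def TightCycleFree {V : Type*} [DecidableEq V] (r : ℕ) (E : Set (Finset V)) : Prop :=
  ¬ HasTightCycle r E

/-- `f_r(n)`: the maximum number of edges of an `r`-uniform tight-cycle-free
hypergraph on `n` vertices. -/
noncomputable def tightCycleTuran (r n : ℕ) : ℕ :=
  sSup {m | ∃ E : Finset (Finset (Fin n)), (∀ e ∈ E, e.card = r) ∧
    TightCycleFree r (E : Set (Finset (Fin n))) ∧ E.card = m}

/-!
Every edge of the cone hypergraph contains exactly one apex `(i, s)`, so along a tight cycle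
the apexes occupy every third position and the length is `3m`. The non-apex pair between two
consecutive apexes is an edge of the graphs of both, so edge-disjointness puts all apexes of the
cycle over a single graph `G i`. Deleting the apexes leaves a cycle of length `2m` in `G i`, and
the `m` apexes are distinct points of `{i} × [k]`, whence `2m ≤ 2k`.
-/

open Function SimpleGraph Sum

variable {V ι S W : Type*}

theorem SimpleGraph.exists_isCycle_of_periodic {G : SimpleGraph V} {L : ℕ} (hL : 3 ≤ L)
    {g : ℕ → V} (hper : Periodic g L) (hinj : Set.InjOn g (Set.Iio L))
    (hadj : ∀ r, G.Adj (g r) (g (r + 1))) : ∃ x, ∃ w : G.Walk x x, w.IsCycle ∧ w.length = L := by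
  obtain ⟨n, rfl⟩ : ∃ n, L = n + 3 := ⟨L - 3, by omega⟩
  have hsucc (j : Fin (n + 3)) : g ↑(j + 1) = g (j + 1) := by
    rw [Fin.val_add, Fin.val_one, hper.map_mod_nat]
  refine (cycleGraph_isContained_iff (by omega)).mp
    ⟨⟨⟨fun j => g j, fun {a b} hab => ?_⟩, fun a b h => Fin.ext (hinj a.isLt b.isLt h)⟩⟩
  rcases cycleGraph_adj.mp hab with h | h <;> rw [sub_eq_iff_eq_add'] at h <;> subst h <;>
    rw [hsucc]
  · exact (hadj b).symm
  · exact hadj a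

theorem Function.Periodic.three_dvd_of_sum_eq_one {χ : ℕ → ℕ} {ℓ : ℕ} (hℓ : Periodic χ ℓ)
    (h3 : Periodic χ 3) (hsum : χ 0 + χ 1 + χ 2 = 1) : 3 ∣ ℓ := by
  have hmod : Periodic χ (ℓ % 3) := fun r => by
    rw [← h3.nat_mul (ℓ / 3) (r + ℓ % 3), add_assoc, Nat.cast_id, Nat.mod_add_div' ℓ 3, hℓ]
  by_contra hndvd
  rcases (by omega : ℓ % 3 = 1 ∨ ℓ % 3 = 2) with h | h <;> rw [h] at hmod
  · have : χ 1 = χ 0 := hmod 0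
    have : χ 2 = χ 1 := hmod 1
    omega
  · have : χ 2 = χ 0 := hmod 0
    have : χ 3 = χ 1 := hmod 1
    have : χ 3 = χ 0 := h3 0
    omega

theorem HasTightCycle.mono [DecidableEq W] {r : ℕ} {E E' : Set (Finset W)} (h : HasTightCycle r E)
    (hE : E ⊆ E') : HasTightCycle r E' := by
  obtain ⟨ℓ, hℓ, v, hv, hw⟩ := h
  exact ⟨ℓ, hℓ, v, hv, fun i => hE (hw i)⟩

theorem tightWindow_three [DecidableEq W] {ℓ : ℕ} (v : ZMod ℓ → W) (i : ZMod ℓ) :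
    tightWindow 3 v i = {v i, v (i + 1), v (i + 2)} := by
  rw [tightWindow, show (Finset.univ : Finset (Fin 3)) = {0, 1, 2} by decide]
  simp [Finset.image_insert]

/-- A tight cycle indexed by `ℕ` instead of `ZMod ℓ`, so that positions are handled by `omega`. -/
structure IsPeriodicTightCycle [DecidableEq W] (E : Set (Finset W)) (ℓ : ℕ) (u : ℕ → W) : Prop where
  periodic : Periodic u ℓ
  modEq_of_eq : ∀ a b, u a = u b → a ≡ b [MOD ℓ]
  mem : ∀ r, {u r, u (r + 1), u (r + 2)} ∈ E

theorem IsTightCycleIn.exists_isPeriodicTightCycle [DecidableEq W] {ℓ : ℕ} {E : Set (Finset W)}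
    (h : IsTightCycleIn 3 ℓ E) : ∃ u, IsPeriodicTightCycle E ℓ u := by
  obtain ⟨v, hv, hw⟩ := h
  refine ⟨fun r => v r, fun r => by simp,
    fun a b h => (ZMod.natCast_eq_natCast_iff a b ℓ).mp (hv h), fun r => ?_⟩
  simpa [tightWindow_three] using hw r

namespace IsPeriodicTightCycle

variable [DecidableEq W] {E : Set (Finset W)} {ℓ : ℕ} {u : ℕ → W}

theorem comp_add_right (hu : IsPeriodicTightCycle E ℓ u) (d : ℕ) :
    IsPeriodicTightCycle E ℓ (fun r => u (r + d)) where
  periodic r := by simpa only [add_right_comm r ℓ d] using hu.periodic (r + d)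
  modEq_of_eq a b h := Nat.ModEq.add_right_cancel' d (hu.modEq_of_eq _ _ h)
  mem r := by simpa only [add_right_comm _ _ d] using hu.mem (r + d)

theorem injOn_Ico (hu : IsPeriodicTightCycle E ℓ u) (w : ℕ) : Set.InjOn u (Set.Ico w (w + ℓ)) := by
  intro p hp q hq h
  simp only [Set.mem_Ico] at hp hq
  have key {a b : ℕ} (hab : a ≤ b) (hb : b < a + ℓ) (h : u a = u b) : a = b := by
    have := Nat.eq_zero_of_dvd_of_lt ((Nat.modEq_iff_dvd' hab).mp (hu.modEq_of_eq a b h)) (by omega)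
    omega
  rcases le_total p q with hpq | hqp
  · exact key hpq (by omega) h
  · exact (key hqp (by omega) h.symm).symm

end IsPeriodicTightCycle

section cone

variable [DecidableEq V] [DecidableEq ι] [DecidableEq S] {G : ι → SimpleGraph V}

variable (S) in
def coneHypergraph (G : ι → SimpleGraph V) : Set (Finset (V ⊕ ι × S)) :=
  {e | ∃ a b i s, (G i).Adj a b ∧ e = {inl a, inl b, inr (i, s)}}

theorem isRight_toNat_add_of_mem_coneHypergraph {x y z : V ⊕ ι × S} (hxy : x ≠ y) (hxz : x ≠ z)
    (hyz : y ≠ z) (h : {x, y, z} ∈ coneHypergraph S G) :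
    x.isRight.toNat + y.isRight.toNat + z.isRight.toNat = 1 := by
  obtain ⟨a, b, i, s, hab, he⟩ := h
  have hsum := congrArg (∑ v ∈ ·, v.isRight.toNat) he
  rw [Finset.sum_insert (by simp [hxy, hxz]), Finset.sum_pair hyz,
    Finset.sum_insert (by simp [hab.ne]), Finset.sum_pair (by simp)] at hsum
  simpa [add_assoc] using hsum

theorem exists_adj_of_mem_coneHypergraph {e : Finset (V ⊕ ι × S)} (he : e ∈ coneHypergraph S G)
    {x y : V ⊕ ι × S} {c : ι × S} (hx : x ∈ e) (hy : y ∈ e) (hc : inr c ∈ e) (hxy : x ≠ y)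
    (hxc : x ≠ inr c) (hyc : y ≠ inr c) : ∃ a b, x = inl a ∧ y = inl b ∧ (G c.1).Adj a b := by
  obtain ⟨a, b, i, s, hab, rfl⟩ := he
  simp only [Finset.mem_insert, Finset.mem_singleton] at hx hy hc
  obtain rfl : c = (i, s) := by simpa using hc
  rcases hx with rfl | rfl | rfl <;> rcases hy with rfl | rfl | rfl <;>
    first
      | exact absurd rfl ‹_›
      | exact ⟨_, _, rfl, rfl, hab⟩
      | exact ⟨_, _, rfl, rfl, hab.symm⟩

namespace IsPeriodicTightCycle

variable {ℓ : ℕ} {u : ℕ → V ⊕ ι × S}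

theorem isRight_toNat_add (hu : IsPeriodicTightCycle (coneHypergraph S G) ℓ u) (hℓ : 2 < ℓ)
    (r : ℕ) : (u r).isRight.toNat + (u (r + 1)).isRight.toNat + (u (r + 2)).isRight.toNat = 1 := by
  have hne {p q : ℕ} (hrp : r ≤ p) (hpq : p < q) (hq : q ≤ r + 2) : u p ≠ u q := fun h =>
    hpq.ne (hu.injOn_Ico r ⟨hrp, by omega⟩ ⟨by omega, by omega⟩ h)
  exact isRight_toNat_add_of_mem_coneHypergraph (hne le_rfl (by omega) (by omega))
    (hne le_rfl (by omega) le_rfl) (hne (by omega) (by omega) le_rfl) (hu.mem r)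

theorem periodic_isRight_toNat (hu : IsPeriodicTightCycle (coneHypergraph S G) ℓ u)
    (hℓ : 2 < ℓ) : Periodic (fun r => (u r).isRight.toNat) 3 := fun r => by
  have h₀ := hu.isRight_toNat_add hℓ r
  have h₁ := hu.isRight_toNat_add hℓ (r + 1)
  simp only [add_assoc, Nat.reduceAdd] at h₁ ⊢
  omega

theorem three_dvd (hu : IsPeriodicTightCycle (coneHypergraph S G) ℓ u) (hℓ : 2 < ℓ) : 3 ∣ ℓ :=
  Periodic.three_dvd_of_sum_eq_one (fun r => congrArg (·.isRight.toNat) (hu.periodic r))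
    (hu.periodic_isRight_toNat hℓ) (hu.isRight_toNat_add hℓ 0)

theorem exists_shift_eq_inr (hu : IsPeriodicTightCycle (coneHypergraph S G) ℓ u) (hℓ : 2 < ℓ) :
    ∃ d, ∃ c : ℕ → ι × S, ∀ j, u (3 * j + 2 + d) = inr (c j) := by
  obtain ⟨p, hp⟩ : ∃ p, (u p).isRight := by
    by_contra! h
    simpa [h] using hu.isRight_toNat_add hℓ 0
  have hright (j : ℕ) : (u (3 * j + 2 + (p + 1))).isRight := by
    have := (hu.periodic_isRight_toNat hℓ).nat_mul (j + 1) p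
    rw [show 3 * j + 2 + (p + 1) = p + (j + 1) * 3 by ring]
    simpa [hp] using this
  choose c hc using fun j => isRight_iff.mp (hright j)
  exact ⟨p + 1, c, hc⟩

theorem exists_adj (hu : IsPeriodicTightCycle (coneHypergraph S G) ℓ u) (hℓ : 2 < ℓ)
    {w p q z : ℕ} (hp : w ≤ p ∧ p ≤ w + 2) (hq : w ≤ q ∧ q ≤ w + 2) (hz : w ≤ z ∧ z ≤ w + 2)
    (hpq : p ≠ q) (hpz : p ≠ z) (hqz : q ≠ z) {c : ι × S} (hc : u z = inr c) :
    ∃ a b, u p = inl a ∧ u q = inl b ∧ (G c.1).Adj a b := by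
  have hmem {r : ℕ} (hr : w ≤ r ∧ r ≤ w + 2) : u r ∈ ({u w, u (w + 1), u (w + 2)} : Finset _) := by
    obtain ⟨d, rfl⟩ : ∃ d, r = w + d := ⟨r - w, by omega⟩
    have : d ≤ 2 := by omega
    interval_cases d <;> simp
  have hne {r s : ℕ} (hr : w ≤ r ∧ r ≤ w + 2) (hs : w ≤ s ∧ s ≤ w + 2) (hrs : r ≠ s) :
      u r ≠ u s := fun h => hrs (hu.injOn_Ico w ⟨hr.1, by omega⟩ ⟨hs.1, by omega⟩ h)
  exact exists_adj_of_mem_coneHypergraph (hu.mem w) (hmem hp) (hmem hq) (hc ▸ hmem hz)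
    (hne hp hq hpq) (hc ▸ hne hp hz hpz) (hc ▸ hne hq hz hqz)

theorem fst_succ_eq (hdisj : Pairwise (Disjoint on fun i => (G i).edgeSet))
    (hu : IsPeriodicTightCycle (coneHypergraph S G) ℓ u) (hℓ : 2 < ℓ) {c : ℕ → ι × S}
    (hc : ∀ j, u (3 * j + 2) = inr (c j)) (j : ℕ) : (c (j + 1)).1 = (c j).1 := by
  obtain ⟨a, b, ha, hb, hab⟩ := hu.exists_adj hℓ (w := 3 * j + 2) (p := 3 * j + 3)
    (q := 3 * j + 4) ⟨by omega, by omega⟩ ⟨by omega, by omega⟩ ⟨le_rfl, by omega⟩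
    (by omega) (by omega) (by omega) (hc j)
  obtain ⟨a', b', ha', hb', hab'⟩ := hu.exists_adj hℓ (w := 3 * j + 3) (p := 3 * j + 3)
    (q := 3 * j + 4) ⟨le_rfl, by omega⟩ ⟨by omega, by omega⟩ ⟨by omega, by omega⟩
    (by omega) (by omega) (by omega) (hc (j + 1))
  obtain rfl : a' = a := inl_injective (ha'.symm.trans ha)
  obtain rfl : b' = b := inl_injective (hb'.symm.trans hb)
  -- the pair at positions `3j+3, 3j+4` lies in the windows of the apexes `c j` and `c (j+1)`
  by_contra hne
  exact Set.disjoint_left.mp (hdisj hne) ((G _).mem_edgeSet.mpr hab') ((G _).mem_edgeSet.mpr hab)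

theorem exists_isCycle_length_le [Fintype S] (hdisj : Pairwise (Disjoint on fun i => (G i).edgeSet))
    {m : ℕ} (hm : 2 ≤ m) (hu : IsPeriodicTightCycle (coneHypergraph S G) (3 * m) u)
    {c : ℕ → ι × S} (hc : ∀ j, u (3 * j + 2) = inr (c j)) :
    ∃ i x, ∃ w : (G i).Walk x x, w.IsCycle ∧ w.length ≤ 2 * Fintype.card S := by
  have hℓ : 2 < 3 * m := by omega
  have hfst (j : ℕ) : (c j).1 = (c 0).1 := by
    induction j with
    | zero => rfl
    | succ j ih => rw [hu.fst_succ_eq hdisj hℓ hc, ih]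
  -- the non-apex vertices sit at the positions `r + r / 2`
  have hleft (r : ℕ) : ∃ a b, u (r + r / 2) = inl a ∧ u (r + 1 + (r + 1) / 2) = inl b ∧
      (G (c 0).1).Adj a b := by
    rw [← hfst (r / 2)]
    exact hu.exists_adj hℓ (w := 3 * (r / 2) + r % 2) ⟨by omega, by omega⟩ ⟨by omega, by omega⟩
      ⟨by omega, by omega⟩ (by omega) (by omega) (by omega) (hc _)
  choose g g' hg hg' hadj using hleft
  have hg'g (r : ℕ) : g' r = g (r + 1) := inl_injective ((hg' r).symm.trans (hg (r + 1)))
  simp only [hg'g] at hadj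
  have hper : Periodic g (2 * m) := fun r => inl_injective <| by
    rw [← hg, ← hg, show r + 2 * m + (r + 2 * m) / 2 = r + r / 2 + 3 * m by omega]
    exact hu.periodic _
  have hinj : Set.InjOn g (Set.Iio (2 * m)) := fun a ha b hb h => by
    simp only [Set.mem_Iio] at ha hb
    have := hu.injOn_Ico 0 (x₁ := a + a / 2) (x₂ := b + b / 2) ⟨by omega, by omega⟩
      ⟨by omega, by omega⟩ (by rw [hg, hg, h])
    omega
  obtain ⟨x, w, hw, hlen⟩ := exists_isCycle_of_periodic (by omega) hper hinj hadj
  have hcard : m ≤ Fintype.card S := by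
    have : Injective fun j : Fin m => (c j).2 := fun a b h => by
      have := hu.injOn_Ico 0 (x₁ := 3 * a + 2) (x₂ := 3 * b + 2) ⟨by omega, by omega⟩
        ⟨by omega, by omega⟩ (by rw [hc, hc, Prod.ext ((hfst a).trans (hfst b).symm) h])
      exact Fin.ext (by omega)
    simpa using Fintype.card_le_of_injective _ this
  exact ⟨_, x, w, hw, by omega⟩

end IsPeriodicTightCycle

theorem exists_isCycle_length_le_of_hasTightCycle [Fintype S]
    (hdisj : Pairwise (Disjoint on fun i => (G i).edgeSet))
    (h : HasTightCycle 3 (coneHypergraph S G)) :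
    ∃ i x, ∃ w : (G i).Walk x x, w.IsCycle ∧ w.length ≤ 2 * Fintype.card S := by
  obtain ⟨ℓ, hℓ, hcyc⟩ := h
  obtain ⟨u, hu⟩ := hcyc.exists_isPeriodicTightCycle
  obtain ⟨m, rfl⟩ := hu.three_dvd (by omega)
  obtain ⟨d, c, hc⟩ := hu.exists_shift_eq_inr (by omega)
  exact (hu.comp_add_right d).exists_isCycle_length_le hdisj (by omega) hc

end cone

theorem construction_tightCycleFree_general (n k t : ℕ)
    (G : Fin t → SimpleGraph (Fin n ⊕ Fin n))
    (hdisj : ∀ i j, i ≠ j → Disjoint ((G i).edgeSet) ((G j).edgeSet))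
    (hgirth : ∀ i, ∀ x, ∀ w : (G i).Walk x x, w.IsCycle → ¬ w.length ≤ 2 * k) :
    TightCycleFree 3
      ({e | ∃ (x y : Fin n) (i : Fin t) (s : Fin k),
          (G i).Adj (Sum.inl x) (Sum.inr y) ∧
          e = {Sum.inl (Sum.inl x), Sum.inl (Sum.inr y), Sum.inr (i, s)}} :
        Set (Finset ((Fin n ⊕ Fin n) ⊕ (Fin t × Fin k)))) := by
  intro hcyc
  obtain ⟨i, x, w, hw, hlen⟩ := exists_isCycle_length_le_of_hasTightCycle (S := Fin k)
    (fun i j => hdisj i j) (hcyc.mono fun _ ⟨x, y, i, s, hxy, he⟩ => ⟨_, _, i, s, hxy, he⟩)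
  exact hgirth i x w hw (by simpa using hlen)

/-- The explicit construction in Lemma 2: attach `k` new vertices `(i, s)` to each
graph `Gᵢ`, replacing each edge `{x, y}` of `Gᵢ` by the hyperedges `{x, y, (i, s)}`.
The resulting 3-partite 3-uniform hypergraph is tight-cycle-free. -/
theorem construction_tightCycleFree (n k t : ℕ)
    (G : Fin t → SimpleGraph (Fin n ⊕ Fin n))
    (hsub : ∀ i, G i ≤ completeBipartiteGraph (Fin n) (Fin n))
    (hdisj : ∀ i j, i ≠ j → Disjoint ((G i).edgeSet) ((G j).edgeSet))
    (hgirth : ∀ i, ∀ x, ∀ w : (G i).Walk x x, w.IsCycle → ¬ w.length ≤ 2 * k) :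
    TightCycleFree 3
      ({e | ∃ (x y : Fin n) (i : Fin t) (s : Fin k),
          (G i).Adj (Sum.inl x) (Sum.inr y) ∧
          e = {Sum.inl (Sum.inl x), Sum.inl (Sum.inr y), Sum.inr (i, s)}} :
        Set (Finset ((Fin n ⊕ Fin n) ⊕ (Fin t × Fin k)))) :=
  construction_tightCycleFree_general n k t G hdisj hgirth
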